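/- Let s and t be positive integers, let (A_1,…,A_m) be the associated partition of an (s,t)-spike M, for J ⊆ [m] let A_J = ⋃_{j∈J} A_j, and let (J,K) be a partition of [m] with |J| ≤ |K|. Then: (i) if |J| ≤ t−1, then λ(A_J) = r(A_J); (ii) if t−1 ≤ |J| ≤ m−s, then λ(A_J) = t + |J| − 1 when |J| < s, and λ(A_J) = s + t − 2 when s ≤ |J| ≤ m − t + 1; (iii) if |J| > m−s, then λ(A_J) = m − s + t. -/

import Mathlib

/-!
The union of fewer than `s` arms is a proper subset of a circuit, hence independent; dually the
complement of fewer than `t` arms is spanning. Once a set of arms contains `s - 1` arms, a new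
arm `{x, y}` raises the rank by at most one, because `x` completes a circuit with `s - 1` old
arms and `y`. Comparing a union of arms with a spanning union of `m - t + 1` arms gives
`r(A_I) = |I| + s - 1` for `s - 1 ≤ |I| ≤ m - t + 1`; the resulting bound `r(M) ≤ m + s - t`,
its dual, and `r(M) + r*(M) = 2m` force `r(M) = m + s - t`. Each case is then the evaluation of `λ(A_J) = r(A_J) + r(A_K) - r(M)`.
-/

open Set Function

namespace Matroid

variable {α : Type*}

/-- A circuit of a matroid: a minimal dependent set. -/
def IsCircuit' (M : Matroid α) (C : Set α) : Prop := Minimal M.Dep C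

/-- A cocircuit of a matroid: a circuit of the dual matroid. -/
def IsCocircuit' (M : Matroid α) (C : Set α) : Prop := M✶.IsCircuit' C

/-- The `ℕ`-valued rank of a set `X` in a matroid `M`:
the size of a largest independent subset of `X`. -/
noncomputable def rk' (M : Matroid α) (X : Set α) : ℕ :=
  sSup {n : ℕ | ∃ I, M.Indep I ∧ I ⊆ X ∧ I.ncard = n}

/-- The connectivity function `λ(X) = r(X) + r(E − X) − r(M)`. -/
noncomputable def lam' (M : Matroid α) (X : Set α) : ℕ :=
  M.rk' X + M.rk' (M.E \ X) - M.rk' M.E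

/-- The `(s,u,t,v)`-property: every `s`-element subset of the ground set is contained in a
circuit of size `u`, and every `t`-element subset is contained in a cocircuit of size `v`. -/
def HasProp (M : Matroid α) (s u t v : ℕ) : Prop :=
  (∀ S ⊆ M.E, S.ncard = s → ∃ C, M.IsCircuit' C ∧ C.ncard = u ∧ S ⊆ C) ∧
  (∀ T ⊆ M.E, T.ncard = t → ∃ C, M.IsCocircuit' C ∧ C.ncard = v ∧ T ⊆ C)

/-- A `t`-echidna of order `n`: a family of `n` pairwise disjoint `2`-element subsets of the
ground set (spines) such that the union of any `t` spines is a circuit.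
(A `t`-coechidna of `M` is a `t`-echidna of `M✶`.) -/
def IsEchidna (M : Matroid α) (t : ℕ) {n : ℕ} (S : Fin n → Set α) : Prop :=
  (∀ i, S i ⊆ M.E) ∧ (∀ i, (S i).ncard = 2) ∧
  Pairwise (Function.onFun Disjoint S) ∧
  ∀ I : Finset (Fin n), I.card = t → M.IsCircuit' (⋃ i ∈ I, S i)

/-- `M` is an `(s,t)`-spike with associated partition `(A 1, …, A m)`: the `A i` are `m`
pairwise disjoint pairs partitioning the ground set, with `m ≥ max s t`, such that the union of
any `s` pairs is a circuit and the union of any `t` pairs is a cocircuit. -/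
def IsSpike (M : Matroid α) (s t : ℕ) {m : ℕ} (A : Fin m → Set α) : Prop :=
  max s t ≤ m ∧ (⋃ i, A i) = M.E ∧
  Pairwise (Function.onFun Disjoint A) ∧ (∀ i, (A i).ncard = 2) ∧
  (∀ I : Finset (Fin m), I.card = s → M.IsCircuit' (⋃ i ∈ I, A i)) ∧
  (∀ I : Finset (Fin m), I.card = t → M.IsCocircuit' (⋃ i ∈ I, A i))

end Matroid

namespace Matroid

variable {α : Type*} {M : Matroid α} {X : Set α}

/-- `rk'` is a `sSup` in `ℕ`, hence junk on sets of infinite rank; on finite sets it agrees with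
`eRk`, through which the library's rank theory is transported. -/
lemma cast_rk'_eq_eRk (M : Matroid α) (hX : X.Finite) : (M.rk' X : ℕ∞) = M.eRk X := by
  obtain ⟨I, hI⟩ := M.exists_isBasis' X
  have hIfin : I.Finite := hX.subset hI.subset
  suffices M.rk' X = I.ncard by rw [this, hIfin.cast_ncard_eq, hI.encard_eq_eRk]
  refine IsGreatest.csSup_eq ⟨⟨I, hI.indep, hI.subset, rfl⟩, ?_⟩
  rintro _ ⟨J, hJ, hJX, rfl⟩
  have hle := hJ.encard_le_eRk_of_subset hJX
  rw [← hI.encard_eq_eRk, ← (hX.subset hJX).cast_ncard_eq, ← hIfin.cast_ncard_eq] at hle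
  exact_mod_cast hle

lemma Indep.ncard_le_rk' {I : Set α} (hI : M.Indep I) (hIX : I ⊆ X) (hX : X.Finite) :
    I.ncard ≤ M.rk' X := by
  have h := hI.encard_le_eRk_of_subset hIX
  rw [← (hX.subset hIX).cast_ncard_eq, ← M.cast_rk'_eq_eRk hX] at h
  exact_mod_cast h

lemma Indep.rk'_eq_ncard (hX : M.Indep X) (hfin : X.Finite) : M.rk' X = X.ncard := by
  have h := M.cast_rk'_eq_eRk hfin
  rw [hX.eRk_eq_encard, ← hfin.cast_ncard_eq] at h
  exact_mod_cast h

lemma Spanning.rk'_eq (hX : M.Spanning X) (hE : M.E.Finite) : M.rk' X = M.rk' M.E := by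
  have h := M.cast_rk'_eq_eRk (hE.subset hX.subset_ground)
  rw [hX.eRk_eq, ← eRk_ground, ← M.cast_rk'_eq_eRk hE] at h
  exact_mod_cast h

lemma rk'_ground_add_rk'_dual_ground (hE : M.E.Finite) :
    M.rk' M.E + M✶.rk' M✶.E = M.E.ncard := by
  have h := M.eRank_add_eRank_dual
  rw [← eRk_ground, ← eRk_ground, ← M.cast_rk'_eq_eRk hE, ← M✶.cast_rk'_eq_eRk (X := M✶.E) hE,
    ← hE.cast_ncard_eq] at h
  exact_mod_cast h

lemma rk'_insert_insert_le {x y : α} (hX : X.Finite) (hx : x ∈ M.closure (insert y X)) :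
    M.rk' (insert x (insert y X)) ≤ M.rk' X + 1 := by
  have h : M.eRk (insert x (insert y X)) ≤ M.eRk X + 1 :=
    calc M.eRk (insert x (insert y X)) = M.eRk (insert x (M.closure (insert y X))) :=
          (M.eRk_insert_closure_eq _ _).symm
      _ = M.eRk (insert y X) := by rw [insert_eq_of_mem hx, eRk_closure_eq]
      _ ≤ M.eRk X + 1 := M.eRk_insert_le_add_one y X
  rw [← M.cast_rk'_eq_eRk ((hX.insert y).insert x), ← M.cast_rk'_eq_eRk hX] at h
  exact_mod_cast h

namespace IsSpike

variable {s t m : ℕ} {A : Fin m → Set α} {I J : Finset (Fin m)} {j : Fin m}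

lemma dual (hA : M.IsSpike s t A) : M✶.IsSpike t s A := by
  obtain ⟨hm, hE, hdisj, hncard, hcirc, hcocirc⟩ := hA
  exact ⟨by rwa [max_comm], hE, hdisj, hncard, hcocirc, fun I hI => by
    rw [IsCocircuit', dual_dual]; exact hcirc I hI⟩

variable (hA : M.IsSpike s t A)
include hA

lemma iUnion_eq : ⋃ i, A i = M.E := hA.2.1

lemma pairwise_disjoint : Pairwise (Disjoint on A) := hA.2.2.1

lemma ncard_arm (i : Fin m) : (A i).ncard = 2 := hA.2.2.2.1 i

lemma isCircuit_biUnion (hI : I.card = s) : M.IsCircuit (⋃ i ∈ I, A i) := hA.2.2.2.2.1 I hI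

lemma left_pos : 0 < s := by
  refine Nat.pos_of_ne_zero fun hs => ?_
  have hC : M.IsCircuit (⋃ i ∈ (∅ : Finset (Fin m)), A i) := hA.isCircuit_biUnion (by simp [hs])
  simp only [Finset.notMem_empty, iUnion_of_empty, iUnion_empty] at hC
  exact hC.not_indep M.empty_indep

lemma left_le : s ≤ m := (le_max_left s t).trans hA.1

lemma finite_arm (i : Fin m) : (A i).Finite :=
  Set.finite_of_ncard_ne_zero (by rw [hA.ncard_arm i]; omega)

lemma finite_biUnion (I : Finset (Fin m)) : (⋃ i ∈ I, A i).Finite :=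
  I.finite_toSet.biUnion fun i _ => hA.finite_arm i

lemma finite_ground : M.E.Finite := by
  simpa [← hA.iUnion_eq] using hA.finite_biUnion Finset.univ

lemma ncard_biUnion (I : Finset (Fin m)) : (⋃ i ∈ I, A i).ncard = 2 * I.card := by
  rw [← Finset.set_biUnion_coe, I.finite_toSet.ncard_biUnion (fun i _ => hA.finite_arm i)
    (hA.pairwise_disjoint.set_pairwise _)]
  simp only [hA.ncard_arm]
  rw [finsum_mem_coe_finset, Finset.sum_const, smul_eq_mul, mul_comm]

lemma ncard_ground : M.E.ncard = 2 * m := by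
  simpa [← hA.iUnion_eq] using hA.ncard_biUnion Finset.univ

lemma ground_diff_biUnion (I : Finset (Fin m)) : M.E \ ⋃ i ∈ I, A i = ⋃ i ∈ Iᶜ, A i := by
  ext e
  simp only [← hA.iUnion_eq, mem_sdiff, mem_iUnion, Finset.mem_compl, exists_prop, not_exists,
    not_and]
  constructor
  · rintro ⟨⟨i, hi⟩, hnot⟩
    exact ⟨i, fun hiI => hnot i hiI hi, hi⟩
  · rintro ⟨i, hiI, hi⟩
    refine ⟨⟨i, hi⟩, fun i' hi'I hi' => ?_⟩
    obtain rfl : i' = i := by_contra fun hne => (hA.pairwise_disjoint hne).ne_of_mem hi' hi rfl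
    exact hiI hi'I

lemma indep_biUnion_of_card_lt (hI : I.card < s) : M.Indep (⋃ i ∈ I, A i) := by
  obtain ⟨I₂, hII₂, -, hI₂⟩ :=
    Finset.exists_subsuperset_card_eq (Finset.subset_univ I) hI.le (by simpa using hA.left_le)
  refine IsCircuit.ssubset_indep (hA.isCircuit_biUnion hI₂)
    (ssubset_of_subset_of_ne (biUnion_subset_biUnion_left hII₂) fun h => ?_)
  have hcard := congrArg ncard h
  rw [hA.ncard_biUnion, hA.ncard_biUnion] at hcard
  omega

lemma spanning_biUnion_compl (hI : I.card < t) : M.Spanning (⋃ i ∈ Iᶜ, A i) := by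
  have hco : M.Coindep (⋃ i ∈ I, A i) := hA.dual.indep_biUnion_of_card_lt hI
  rw [← hA.ground_diff_biUnion]
  exact hco.compl_spanning

lemma spanning_biUnion_of_lt (hI : m < I.card + t) : M.Spanning (⋃ i ∈ I, A i) := by
  have hIm : I.card ≤ m := by simpa using I.card_le_univ
  simpa using hA.spanning_biUnion_compl (I := Iᶜ)
    (by rw [Finset.card_compl, Fintype.card_fin]; omega)

lemma rk'_biUnion_of_card_lt (hI : I.card < s) : M.rk' (⋃ i ∈ I, A i) = 2 * I.card := by
  rw [(hA.indep_biUnion_of_card_lt hI).rk'_eq_ncard (hA.finite_biUnion I), hA.ncard_biUnion]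

lemma rk'_insert_arm_le (hsI : s ≤ I.card + 1) (hj : j ∉ I) :
    M.rk' (⋃ i ∈ insert j I, A i) ≤ M.rk' (⋃ i ∈ I, A i) + 1 := by
  obtain ⟨I', hI'I, hI'⟩ := Finset.exists_subset_card_eq (s := I) (n := s - 1) (by omega)
  have hC : M.IsCircuit (⋃ i ∈ insert j I', A i) := hA.isCircuit_biUnion <| by
    rw [Finset.card_insert_of_notMem fun h => hj (hI'I h), hI']
    have := hA.left_pos
    omega
  obtain ⟨x, y, -, hAj⟩ := Set.ncard_eq_two.mp (hA.ncard_arm j)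
  have hxC : x ∈ ⋃ i ∈ insert j I', A i :=
    mem_biUnion (Finset.mem_insert_self j I') (by rw [hAj]; exact mem_insert x {y})
  have hsub : (⋃ i ∈ insert j I', A i) \ {x} ⊆ insert y (⋃ i ∈ I, A i) := by
    rintro z ⟨hz, hzx⟩
    rw [Finset.set_biUnion_insert, hAj] at hz
    rcases hz with (rfl | rfl) | hz
    · exact absurd rfl hzx
    · exact mem_insert z _
    · exact mem_insert_of_mem y (biUnion_subset_biUnion_left hI'I hz)
  have hx := M.closure_subset_closure hsub (hC.mem_closure_sdiff_singleton_of_mem hxC)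
  rw [Finset.set_biUnion_insert, hAj, insert_union, singleton_union]
  exact rk'_insert_insert_le (hA.finite_biUnion I) hx

lemma rk'_biUnion_union_le (hsI : s ≤ I.card + 1) (D : Finset (Fin m)) (hD : Disjoint I D) :
    M.rk' (⋃ i ∈ I ∪ D, A i) ≤ M.rk' (⋃ i ∈ I, A i) + D.card := by
  induction D using Finset.induction_on with
  | empty => simp
  | insert j D hjD ih =>
    obtain ⟨hjI, hID⟩ := Finset.disjoint_insert_right.mp hD
    have hstep := hA.rk'_insert_arm_le (I := I ∪ D)
      (by have := Finset.card_le_card (Finset.subset_union_left (s₁ := I) (s₂ := D)); omega)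
      (j := j) (by simp [hjD, hjI])
    rw [Finset.union_insert, Finset.card_insert_of_notMem hjD]
    have := ih hID
    omega

lemma rk'_le_rk'_add_card_sdiff (hIJ : I ⊆ J) (hsI : s ≤ I.card + 1) :
    M.rk' (⋃ i ∈ J, A i) ≤ M.rk' (⋃ i ∈ I, A i) + (J.card - I.card) := by
  have h := hA.rk'_biUnion_union_le hsI (J \ I) Finset.disjoint_sdiff
  rwa [Finset.union_sdiff_of_subset hIJ, Finset.card_sdiff_of_subset hIJ] at h

lemma rk'_biUnion_add_one_le (hsI : s ≤ I.card + 1) :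
    M.rk' (⋃ i ∈ I, A i) + 1 ≤ I.card + s := by
  obtain ⟨I', hI'I, hI'⟩ := Finset.exists_subset_card_eq (s := I) (n := s - 1) (by omega)
  have h := hA.rk'_le_rk'_add_card_sdiff hI'I (by omega)
  have := hA.left_pos
  rw [hA.rk'_biUnion_of_card_lt (I := I') (by omega), hI'] at h
  omega

lemma two_mul_sub_one_le_rk'_ground : 2 * s - 1 ≤ M.rk' M.E := by
  obtain ⟨I, -, hI⟩ := Finset.exists_subset_card_eq (s := (Finset.univ : Finset (Fin m)))
    (n := s) (by simpa using hA.left_le)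
  have hC : M.IsCircuit (⋃ i ∈ I, A i) := hA.isCircuit_biUnion hI
  obtain ⟨x, hx⟩ := hC.nonempty
  have h := (hC.sdiff_singleton_indep hx).ncard_le_rk'
    (sdiff_subset.trans hC.subset_ground) hA.finite_ground
  rwa [ncard_sdiff_singleton_of_mem hx, hA.ncard_biUnion, hI] at h

lemma add_le_add_one : s + t ≤ m + 1 := by
  have h := rk'_ground_add_rk'_dual_ground hA.finite_ground
  have := hA.two_mul_sub_one_le_rk'_ground
  have := hA.dual.two_mul_sub_one_le_rk'_ground
  have := hA.left_pos
  have := hA.dual.left_pos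
  rw [hA.ncard_ground] at h
  omega

lemma rk'_ground_add_le : M.rk' M.E + t ≤ m + s := by
  have hst := hA.add_le_add_one
  have ht := hA.dual.left_pos
  have htm := hA.dual.left_le
  obtain ⟨I, -, hI⟩ := Finset.exists_subset_card_eq (s := (Finset.univ : Finset (Fin m)))
    (n := m - t + 1) (by simp; omega)
  have h := hA.rk'_biUnion_add_one_le (I := I) (by omega)
  rw [(hA.spanning_biUnion_of_lt (by omega)).rk'_eq hA.finite_ground] at h
  omega

lemma rk'_ground_add : M.rk' M.E + t = m + s := by
  have h := rk'_ground_add_rk'_dual_ground hA.finite_ground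
  have := hA.rk'_ground_add_le
  have := hA.dual.rk'_ground_add_le
  rw [hA.ncard_ground] at h
  omega

lemma rk'_biUnion_add_one (hsI : s ≤ I.card + 1) (hIt : I.card + t ≤ m + 1) :
    M.rk' (⋃ i ∈ I, A i) + 1 = I.card + s := by
  have ht := hA.dual.left_pos
  have htm := hA.dual.left_le
  obtain ⟨I₂, hII₂, -, hI₂⟩ := Finset.exists_subsuperset_card_eq (Finset.subset_univ I)
    (n := m - t + 1) (by omega) (by simp; omega)
  have hlow := hA.rk'_le_rk'_add_card_sdiff hII₂ hsI
  rw [(hA.spanning_biUnion_of_lt (by omega)).rk'_eq hA.finite_ground, hI₂] at hlow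
  have := hA.rk'_biUnion_add_one_le hsI
  have := hA.rk'_ground_add
  omega

lemma lam'_biUnion (I : Finset (Fin m)) :
    M.lam' (⋃ i ∈ I, A i) = M.rk' (⋃ i ∈ I, A i) + M.rk' (⋃ i ∈ Iᶜ, A i) - M.rk' M.E := by
  rw [lam', hA.ground_diff_biUnion]

end IsSpike

end Matroid

universe u

open Matroid

theorem statement16_general {α : Type u} (s t m : ℕ)
    (M : Matroid α) (A : Fin m → Set α) (hA : M.IsSpike s t A)
    (J K : Finset (Fin m)) (hK : K = Jᶜ) (hcard : J.card ≤ K.card) :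
    (J.card ≤ t - 1 → M.lam' (⋃ j ∈ J, A j) = M.rk' (⋃ j ∈ J, A j)) ∧
    (t - 1 ≤ J.card → J.card ≤ m - s →
      (J.card < s → M.lam' (⋃ j ∈ J, A j) = t + J.card - 1) ∧
      (s ≤ J.card → J.card ≤ m - t + 1 → M.lam' (⋃ j ∈ J, A j) = s + t - 2)) ∧
    (m - s < J.card → M.lam' (⋃ j ∈ J, A j) = m - s + t) := by
  have hs := hA.left_pos
  have ht := hA.dual.left_pos
  have hst := hA.add_le_add_one
  have hg := hA.rk'_ground_add
  have hJK : J.card + K.card = m := by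
    rw [hK, Finset.card_add_card_compl, Fintype.card_fin]
  rw [hA.lam'_biUnion, ← hK]
  refine ⟨fun hJ => ?_, fun hJt hJs => ⟨fun hJs' => ?_, fun hsJ hJt' => ?_⟩, fun hJ => ?_⟩
  · have hKsp : M.Spanning (⋃ i ∈ K, A i) := hK ▸ hA.spanning_biUnion_compl (I := J) (by omega)
    rw [hKsp.rk'_eq hA.finite_ground]
    omega
  · have hrJ := hA.rk'_biUnion_of_card_lt hJs'
    have hrK := hA.rk'_biUnion_add_one (I := K) (by omega) (by omega)
    omega
  · have hrJ := hA.rk'_biUnion_add_one (I := J) (by omega) (by omega)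
    have hrK := hA.rk'_biUnion_add_one (I := K) (by omega) (by omega)
    omega
  · have hrJ := hA.rk'_biUnion_of_card_lt (I := J) (by omega)
    have hrK := hA.rk'_biUnion_of_card_lt (I := K) (by omega)
    omega

/-- Let `(A 1, …, A m)` be the associated partition of an `(s,t)`-spike and let
`(J,K)` be a partition of `[m]` with `|J| ≤ |K|`.  Then: (i) if `|J| ≤ t−1` then
`λ(A_J) = r(A_J)`; (ii) if `t−1 ≤ |J| ≤ m−s` then `λ(A_J) = t + |J| − 1` when `|J| < s`, and
`λ(A_J) = s + t − 2` when `s ≤ |J| ≤ m − t + 1`; (iii) if `|J| > m−s` then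
`λ(A_J) = m − s + t`. -/
theorem statement16 {α : Type u} (s t m : ℕ) (hs : 0 < s) (ht : 0 < t)
    (M : Matroid α) (A : Fin m → Set α) (hA : M.IsSpike s t A)
    (J K : Finset (Fin m)) (hK : K = Jᶜ) (hcard : J.card ≤ K.card) :
    (J.card ≤ t - 1 → M.lam' (⋃ j ∈ J, A j) = M.rk' (⋃ j ∈ J, A j)) ∧
    (t - 1 ≤ J.card → J.card ≤ m - s →
      (J.card < s → M.lam' (⋃ j ∈ J, A j) = t + J.card - 1) ∧
      (s ≤ J.card → J.card ≤ m - t + 1 → M.lam' (⋃ j ∈ J, A j) = s + t - 2)) ∧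
    (m - s < J.card → M.lam' (⋃ j ∈ J, A j) = m - s + t) :=
  statement16_general s t m M A hA J K hK hcard
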